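/- arXiv:math/0304255 — 4 statements merged into one kernel-verified Lean document; each statement's English description precedes it below -/
import Mathlib

section
/- Uniform global stability of the 3-state closed loop: Consider the closed-loop system ẋ₁ = −x₁ + h(t,x_{2,3}), ẋ₂ = u(t,x)x₃, ẋ₃ = −x₃ − u(t,x)x₂, where u(t,x) = −x₁ + h(t,x_{2,3}) and x_{2,3} := (x₂,x₃), and where h satisfies h(t,0) ≡ 0 and all its first and second partial derivatives are bounded, uniformly in t, by ρ(‖x_{2,3}‖) for some continuous nondecreasing function ρ with ρ(0) = 0. Then: (a) the function V₁(x) := ½‖x_{2,3}‖² satisfies V̇₁ ≤ −x₃² ≤ 0 along solutions, so every solution satisfies ‖x_{2,3}(t)‖ ≤ ‖x_{2,3}(t₀)‖ for all t ≥ t₀; (b) every solution satisfies ‖x₁(t)‖ ≤ ‖x₁(t₀)‖ + ρ̄(‖x_{2,3}(t₀)‖) for all t ≥ t₀, for some continuous nondecreasing ρ̄ with ρ̄(0) = 0; (c) all solutions are defined for all t ≥ t₀ and the origin of the closed-loop system is UGS. -/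
open MeasureTheory Metric Filter

noncomputable section

variable {E : Type*} [NormedAddCommGroup E] [NormedSpace ℝ E]

/-- `x` is a solution of `ẋ = f(t,x)` from initial time `t₀`. -/
def IsSolution (f : ℝ → E → E) (t₀ : ℝ) (x : ℝ → E) : Prop :=
  ∀ t, t₀ ≤ t → HasDerivAt x (f t (x t)) t

/-- A class `𝒦∞` function. -/
def IsClassKInf (γ : ℝ → ℝ) : Prop :=
  ContinuousOn γ (Set.Ici 0) ∧ StrictMonoOn γ (Set.Ici 0) ∧ γ 0 = 0 ∧
    Tendsto γ atTop atTop

/-- Uniform global stability of the origin of `ẋ = f(t,x)`. -/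
def UGS (f : ℝ → E → E) : Prop :=
  ∃ γ : ℝ → ℝ, IsClassKInf γ ∧
    ∀ t₀ x, IsSolution f t₀ x → ∀ t, t₀ ≤ t → ‖x t‖ ≤ γ ‖x t₀‖

/-- The closed-loop vector field of the 3-state chained system with
`u(t,x) = -x₁ + h(t,x₂₃)` and `v(t,x) = -x₃ - u(t,x)x₂`. -/
def cl3 (h : ℝ → ℝ × ℝ → ℝ) (t : ℝ) (x : ℝ × ℝ × ℝ) : ℝ × ℝ × ℝ :=
  (-x.1 + h t (x.2.1, x.2.2),
   (-x.1 + h t (x.2.1, x.2.2)) * x.2.2,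
   -x.2.2 - (-x.1 + h t (x.2.1, x.2.2)) * x.2.1)

open Set Topology

namespace Chained3



variable {α : Type*} [PseudoMetricSpace α]

/-- Real-valued Lipschitz bound predicate (easier arithmetic than `LipschitzWith`). -/
def RLip (K : ℝ) (f : α → ℝ) : Prop := ∀ x y, |f x - f y| ≤ K * dist x y

lemma RLip.mono {K K' : ℝ} {f : α → ℝ} (hf : RLip K f) (hK : K ≤ K') : RLip K' f :=
  fun x y => (hf x y).trans (by nlinarith [dist_nonneg (x := x) (y := y)])

lemma rlip_const (c : ℝ) : RLip 0 (fun _ : α => c) := fun x y => by simp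

lemma RLip.neg {K : ℝ} {f : α → ℝ} (hf : RLip K f) : RLip K (fun x => -f x) := by
  intro x y; rw [neg_sub_neg, abs_sub_comm]; exact hf x y

lemma RLip.add {K K' : ℝ} {f g : α → ℝ} (hf : RLip K f) (hg : RLip K' g) :
    RLip (K + K') (fun x => f x + g x) := by
  intro x y
  calc |f x + g x - (f y + g y)| ≤ |f x - f y| + |g x - g y| := by
        rw [show f x + g x - (f y + g y) = (f x - f y) + (g x - g y) by ring]
        exact abs_add_le _ _
    _ ≤ K * dist x y + K' * dist x y := add_le_add (hf x y) (hg x y)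
    _ = (K + K') * dist x y := by ring

lemma RLip.const_mul {K : ℝ} {f : α → ℝ} (hf : RLip K f) (c : ℝ) :
    RLip (|c| * K) (fun x => c * f x) := by
  intro x y
  rw [show c * f x - c * f y = c * (f x - f y) by ring, abs_mul, mul_assoc]
  exact mul_le_mul_of_nonneg_left (hf x y) (abs_nonneg c)

lemma RLip.clamp {K : ℝ} {f : α → ℝ} (hf : RLip K f) (a b : ℝ) :
    RLip K (fun x => min b (max a (f x))) := by
  intro x y
  refine le_trans ?_ (hf x y)
  have h1 : |max a (f x) - max a (f y)| ≤ |f x - f y| := by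
    have := abs_max_sub_max_le_max a (f x) a (f y)
    simpa using this
  calc |min b (max a (f x)) - min b (max a (f y))|
      ≤ |max a (f x) - max a (f y)| := by
        have := abs_min_sub_min_le_max b (max a (f x)) b (max a (f y))
        simpa using this
    _ ≤ |f x - f y| := h1

lemma RLip.mul {K K' A B : ℝ} {f g : α → ℝ} (hf : RLip K f) (hg : RLip K' g)
    (hA : ∀ x, |f x| ≤ A) (hB : ∀ x, |g x| ≤ B) :
    RLip (A * K' + B * K) (fun x => f x * g x) := by
  intro x y
  have : f x * g x - f y * g y = f x * (g x - g y) + g y * (f x - f y) := by ring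
  rw [this]
  calc |f x * (g x - g y) + g y * (f x - f y)|
      ≤ |f x| * |g x - g y| + |g y| * |f x - f y| := by
        refine (abs_add_le _ _).trans ?_; rw [abs_mul, abs_mul]
    _ ≤ A * (K' * dist x y) + B * (K * dist x y) := by
        refine add_le_add (mul_le_mul (hA x) (hg x y) (abs_nonneg _) ?_)
          (mul_le_mul (hB y) (hf x y) (abs_nonneg _) ?_)
        · exact (abs_nonneg _).trans (hA x)
        · exact (abs_nonneg _).trans (hB y)
    _ = (A * K' + B * K) * dist x y := by ring

lemma lipschitzWith_sin : LipschitzWith 1 Real.sin := by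
  apply lipschitzWith_of_nnnorm_deriv_le Real.differentiable_sin
  intro x
  rw [Real.deriv_sin]
  simp only [← NNReal.coe_le_coe, coe_nnnorm, Real.norm_eq_abs, NNReal.coe_one]
  exact Real.abs_cos_le_one x

lemma lipschitzWith_cos : LipschitzWith 1 Real.cos := by
  apply lipschitzWith_of_nnnorm_deriv_le Real.differentiable_cos
  intro x
  rw [Real.deriv_cos']
  simp only [← NNReal.coe_le_coe, coe_nnnorm, Real.norm_eq_abs, NNReal.coe_one]
  rw [abs_neg]
  exact Real.abs_sin_le_one x

lemma RLip.sin_comp {K : ℝ} {f : α → ℝ} (hf : RLip K f) :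
    RLip K (fun x => Real.sin (f x)) := by
  intro x y
  have := lipschitzWith_sin.dist_le_mul (f x) (f y)
  rw [NNReal.coe_one, one_mul, Real.dist_eq] at this
  exact this.trans (hf x y)

lemma RLip.cos_comp {K : ℝ} {f : α → ℝ} (hf : RLip K f) :
    RLip K (fun x => Real.cos (f x)) := by
  intro x y
  have := lipschitzWith_cos.dist_le_mul (f x) (f y)
  rw [NNReal.coe_one, one_mul, Real.dist_eq] at this
  exact this.trans (hf x y)

lemma RLip.toLipschitzWith {K : ℝ} {f : α → ℝ} (hf : RLip K f) :
    LipschitzWith K.toNNReal f := by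
  apply LipschitzWith.of_dist_le_mul
  intro x y
  rw [Real.dist_eq]
  exact (hf x y).trans (mul_le_mul_of_nonneg_right (Real.le_coe_toNNReal K) dist_nonneg)

lemma rlip_fst3 : RLip 1 (fun y : ℝ × ℝ × ℝ => y.1) := by
  intro x y
  rw [one_mul, ← Real.dist_eq]
  rw [Prod.dist_eq]
  exact le_max_left _ _

lemma rlip_snd_fst3 : RLip 1 (fun y : ℝ × ℝ × ℝ => y.2.1) := by
  intro x y
  rw [one_mul, ← Real.dist_eq]
  rw [Prod.dist_eq, Prod.dist_eq]
  exact le_trans (le_max_left _ _) (le_max_right _ _)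

lemma rlip_snd_snd3 : RLip 1 (fun y : ℝ × ℝ × ℝ => y.2.2) := by
  intro x y
  rw [one_mul, ← Real.dist_eq]
  rw [Prod.dist_eq, Prod.dist_eq]
  exact le_trans (le_max_right _ _) (le_max_right _ _)

/-- clamp collapse -/
lemma clamp_eq {a b w : ℝ} (h1 : a ≤ w) (h2 : w ≤ b) : min b (max a w) = w := by
  rw [max_eq_right h1, min_eq_right h2]

lemma clamp_mem {a b : ℝ} (hab : a ≤ b) (w : ℝ) : a ≤ min b (max a w) ∧ min b (max a w) ≤ b :=
  ⟨le_min hab (le_max_left _ _), min_le_left _ _⟩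

lemma clamp_abs_le {a w : ℝ} (ha : 0 ≤ a) : |min a (max 0 w)| ≤ a := by
  rw [abs_le]
  constructor
  · exact le_min ha (le_max_left _ _) |>.trans' (by linarith)
  · exact min_le_left _ _

lemma abs_clamp_le_abs {a w : ℝ} (ha : 0 ≤ a) : |min a (max 0 w)| ≤ |w| := by
  rcases le_total w 0 with hw | hw
  · rw [max_eq_left hw, min_eq_right ha, abs_zero]; exact abs_nonneg w
  · rw [max_eq_right hw, abs_of_nonneg hw]
    rcases le_total a w with h | h
    · rw [min_eq_left h, abs_of_nonneg ha]; exact h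
    · rw [min_eq_right h, abs_of_nonneg hw]




/-- Exponential decay bound: if `x₁' = -x₁ + η` with `|η| ≤ K`, then
`|x₁ t| ≤ |x₁ t₀| + K` for `t ≥ t₀`. -/
lemma decay_bound {x1 η : ℝ → ℝ} {t₀ K : ℝ} (hK : 0 ≤ K)
    (hd : ∀ t, t₀ ≤ t → HasDerivAt x1 (-x1 t + η t) t)
    (hη : ∀ t, t₀ ≤ t → |η t| ≤ K) :
    ∀ t, t₀ ≤ t → |x1 t| ≤ |x1 t₀| + K := by
  intro T hT
  set f : ℝ → ℝ := fun s => Real.exp s * x1 s with hf_def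
  have hfd : ∀ s, t₀ ≤ s → HasDerivAt f (Real.exp s * η s) s := by
    intro s hs
    have := (Real.hasDerivAt_exp s).mul (hd s hs)
    refine this.congr_deriv ?_
    ring
  have key : ∀ ⦃u⦄, u ∈ Icc t₀ T → ‖f u‖ ≤
      Real.exp t₀ * |x1 t₀| + K * (Real.exp u - Real.exp t₀) := by
    apply image_norm_le_of_norm_deriv_right_le_deriv_boundary
      (f' := fun s => Real.exp s * η s) (B' := fun s => K * Real.exp s)
      (B := fun s => Real.exp t₀ * |x1 t₀| + K * (Real.exp s - Real.exp t₀))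
    · intro s hs
      exact ((hfd s hs.1).continuousAt).continuousWithinAt
    · intro s hs
      exact (hfd s hs.1).hasDerivWithinAt
    · rw [Real.norm_eq_abs, abs_mul, abs_of_pos (Real.exp_pos t₀)]
      simp
    · intro s
      have : HasDerivAt (fun u => Real.exp u - Real.exp t₀) (Real.exp s) s :=
        (Real.hasDerivAt_exp s).sub_const _
      exact (this.const_mul K).const_add _
    · intro s hs
      rw [Real.norm_eq_abs, abs_mul, abs_of_pos (Real.exp_pos s), mul_comm]
      exact mul_le_mul_of_nonneg_right (hη s hs.1) (Real.exp_pos s).le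
  have hfT := key ⟨hT, le_rfl⟩
  rw [Real.norm_eq_abs, hf_def, abs_mul, abs_of_pos (Real.exp_pos T)] at hfT
  have h1 : Real.exp t₀ ≤ Real.exp T := Real.exp_le_exp.mpr hT
  have h2 : (0:ℝ) < Real.exp T := Real.exp_pos T
  have h3 : (0:ℝ) < Real.exp t₀ := Real.exp_pos t₀
  have h4 : (0:ℝ) ≤ |x1 t₀| := abs_nonneg _
  nlinarith [hfT]

/-- A function whose (one-sided known, in fact two-sided) derivative is nonpositive on
`Ici t₀` is antitone there. -/
lemma antitoneOn_Ici_of_hasDerivAt_nonpos {f g : ℝ → ℝ} {t₀ : ℝ}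
    (hd : ∀ t, t₀ ≤ t → HasDerivAt f (g t) t) (hg : ∀ t, t₀ ≤ t → g t ≤ 0) :
    AntitoneOn f (Set.Ici t₀) := by
  apply antitoneOn_of_deriv_nonpos (convex_Ici t₀)
  · exact fun t ht => (hd t ht).continuousAt.continuousWithinAt
  · intro t ht
    rw [interior_Ici] at ht
    exact ((hd t (le_of_lt ht)).differentiableAt).differentiableWithinAt
  · intro t ht
    rw [interior_Ici] at ht
    rw [(hd t ht.le).deriv]
    exact hg t ht.le

section hlemmas

variable {h : ℝ → ℝ × ℝ → ℝ} {ρ : ℝ → ℝ}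

/-- Mean value bound for `h` in its second argument. -/
lemma h_lipOn (hρmono : MonotoneOn ρ (Set.Ici 0)) (hρ0 : ρ 0 = 0)
    (hsmooth : ContDiff ℝ 2 (fun q : ℝ × (ℝ × ℝ) => h q.1 q.2))
    (hb1 : ∀ (t : ℝ) (x23 : ℝ × ℝ),
      ‖fderiv ℝ (fun q : ℝ × (ℝ × ℝ) => h q.1 q.2) (t, x23)‖ ≤ ρ ‖x23‖)
    (t s : ℝ) (hs : 0 ≤ s) :
    ∀ y z : ℝ × ℝ, ‖y‖ ≤ s → ‖z‖ ≤ s → |h t y - h t z| ≤ ρ s * ‖y - z‖ := by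
  intro y z hy hz
  set F := fun q : ℝ × (ℝ × ℝ) => h q.1 q.2 with hF
  have hρs : 0 ≤ ρ s := by
    rw [← hρ0]
    exact hρmono (le_refl (0:ℝ)) hs hs
  set f' : (ℝ × ℝ) → ((ℝ × ℝ) →L[ℝ] ℝ) :=
    fun w => (fderiv ℝ F (t, w)).comp (ContinuousLinearMap.inr ℝ ℝ (ℝ × ℝ)) with hf'
  have hder : ∀ w ∈ closedBall (0 : ℝ × ℝ) s,
      HasFDerivWithinAt (fun y => h t y) (f' w) (closedBall (0 : ℝ × ℝ) s) w := by
    intro w _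
    have hFd : HasFDerivAt F (fderiv ℝ F (t, w)) (t, w) :=
      ((hsmooth.differentiable (by norm_num)) (t, w)).hasFDerivAt
    have hincl := hasFDerivAt_prodMk_right (𝕜 := ℝ) t w
    exact (hFd.comp w hincl).hasFDerivWithinAt
  have hbound : ∀ w ∈ closedBall (0 : ℝ × ℝ) s, ‖f' w‖ ≤ ρ s := by
    intro w hw
    apply ContinuousLinearMap.opNorm_le_bound _ hρs
    intro u
    have h1 : ‖(fderiv ℝ F (t, w)).comp (ContinuousLinearMap.inr ℝ ℝ (ℝ × ℝ)) u‖
        ≤ ‖fderiv ℝ F (t, w)‖ * ‖u‖ := by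
      rw [ContinuousLinearMap.comp_apply, ContinuousLinearMap.inr_apply]
      refine (ContinuousLinearMap.le_opNorm _ _).trans ?_
      apply mul_le_mul_of_nonneg_left _ (norm_nonneg _)
      rw [Prod.norm_def, norm_zero]
      exact max_le (norm_nonneg u) le_rfl
    refine h1.trans (mul_le_mul_of_nonneg_right ?_ (norm_nonneg u))
    refine (hb1 t w).trans ?_
    have hws : ‖w‖ ≤ s := by rwa [mem_closedBall_zero_iff] at hw
    exact hρmono (norm_nonneg w) hs hws
  have := Convex.norm_image_sub_le_of_norm_hasFDerivWithin_le hder hbound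
    (convex_closedBall _ _) (mem_closedBall_zero_iff.mpr hz) (mem_closedBall_zero_iff.mpr hy)
  rwa [Real.norm_eq_abs] at this

lemma h_abs_le (hρmono : MonotoneOn ρ (Set.Ici 0)) (hρ0 : ρ 0 = 0)
    (hzero : ∀ t, h t 0 = 0)
    (hsmooth : ContDiff ℝ 2 (fun q : ℝ × (ℝ × ℝ) => h q.1 q.2))
    (hb1 : ∀ (t : ℝ) (x23 : ℝ × ℝ),
      ‖fderiv ℝ (fun q : ℝ × (ℝ × ℝ) => h q.1 q.2) (t, x23)‖ ≤ ρ ‖x23‖)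
    (t : ℝ) (y : ℝ × ℝ) : |h t y| ≤ ρ ‖y‖ * ‖y‖ := by
  have := h_lipOn hρmono hρ0 hsmooth hb1 t ‖y‖ (norm_nonneg y) y 0 le_rfl
    (by simp)
  simpa [hzero t] using this

end hlemmas




/-- Global existence for an ODE whose RHS is, on every time interval, globally Lipschitz
and globally bounded in the space variable. -/
lemma exists_global_solution {F : Type*} [NormedAddCommGroup F] [NormedSpace ℝ F]
    [CompleteSpace F] (v : ℝ → F → F)
    (hlip : ∀ a b : ℝ, ∃ L : NNReal, ∀ t ∈ Set.Icc a b, LipschitzWith L (v t))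
    (hbdd : ∀ a b : ℝ, ∃ C : ℝ, 0 ≤ C ∧ ∀ t ∈ Set.Icc a b, ∀ y, ‖v t y‖ ≤ C)
    (hcont : ∀ y, Continuous fun t => v t y)
    (t₀ : ℝ) (y₀ : F) :
    ∃ Y : ℝ → F, Y t₀ = y₀ ∧ ∀ t, HasDerivAt Y (v t (Y t)) t := by
  have hsol : ∀ n : ℕ, ∃ f : ℝ → F, f t₀ = y₀ ∧ ∀ t ∈ Icc (t₀ - (n+1:ℝ)) (t₀ + (n+1:ℝ)),
      HasDerivWithinAt f (v t (f t)) (Icc (t₀ - (n+1:ℝ)) (t₀ + (n+1:ℝ))) t := by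
    intro n
    obtain ⟨L, hL⟩ := hlip (t₀ - (n+1:ℝ)) (t₀ + (n+1:ℝ))
    obtain ⟨C, hC0, hC⟩ := hbdd (t₀ - (n+1:ℝ)) (t₀ + (n+1:ℝ))
    have hn1 : (0:ℝ) < (n:ℝ) + 1 := by positivity
    have hpl : IsPicardLindelof v (tmin := t₀ - (n+1:ℝ)) (tmax := t₀ + (n+1:ℝ))
        ⟨t₀, by constructor <;> linarith⟩ y₀ (C * ((n:ℝ)+1)).toNNReal 0 C.toNNReal L :=
      { lipschitzOnWith := fun t ht => (hL t ht).lipschitzOnWith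
        continuousOn := fun x _ => (hcont x).continuousOn
        norm_le := fun t ht x _ => by rw [Real.coe_toNNReal _ hC0]; exact hC t ht x
        mul_max_le := by
          have e1 : t₀ + ((n:ℝ)+1) - t₀ = (n:ℝ)+1 := by ring
          have e2 : t₀ - (t₀ - ((n:ℝ)+1)) = (n:ℝ)+1 := by ring
          simp only [Real.coe_toNNReal _ hC0, e1, e2, max_self, NNReal.coe_zero, sub_zero,
            Real.coe_toNNReal _ (by positivity : 0 ≤ C * ((n:ℝ)+1)), le_refl] }
    exact hpl.exists_eq_forall_mem_Icc_hasDerivWithinAt₀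
  choose fn hfn0 hfnd using hsol
  have hIccmono : ∀ {m n : ℕ}, m ≤ n →
      Icc (t₀ - (m+1:ℝ)) (t₀ + (m+1:ℝ)) ⊆ Icc (t₀ - (n+1:ℝ)) (t₀ + (n+1:ℝ)) := by
    intro m n hmn
    have : (m:ℝ) ≤ (n:ℝ) := Nat.cast_le.mpr hmn
    apply Icc_subset_Icc <;> linarith
  have agree : ∀ m n : ℕ, m ≤ n →
      EqOn (fn m) (fn n) (Icc (t₀ - (m+1:ℝ)) (t₀ + (m+1:ℝ))) := by
    intro m n hmn
    have hmn' : (m:ℝ) ≤ (n:ℝ) := Nat.cast_le.mpr hmn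
    obtain ⟨L, hL⟩ := hlip (t₀ - (n+1:ℝ)) (t₀ + (n+1:ℝ))
    have hab : t₀ - (n+1:ℝ) ≤ t₀ + (n+1:ℝ) := by
      have : (0:ℝ) ≤ (n:ℝ) + 1 := by positivity
      linarith
    set v' : ℝ → F → F := fun τ => v (min (t₀ + (n+1:ℝ)) (max (t₀ - (n+1:ℝ)) τ)) with hv'def
    have hv' : ∀ τ, LipschitzOnWith L (v' τ) univ := by
      intro τ
      refine (hL _ ⟨le_min hab (le_max_left _ _), min_le_left _ _⟩).lipschitzOnWith
    have hclamp : ∀ τ ∈ Icc (t₀ - (n+1:ℝ)) (t₀ + (n+1:ℝ)), v' τ = v τ := by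
      intro τ hτ
      rw [hv'def]
      simp only [max_eq_right hτ.1, min_eq_right hτ.2]
    have ht0mem : t₀ ∈ Ioo (t₀ - (m+1:ℝ)) (t₀ + (m+1:ℝ)) := by
      have : (0:ℝ) < (m:ℝ) + 1 := by positivity
      constructor <;> linarith
    apply ODE_solution_unique_of_mem_Icc (v := v') (s := fun _ => univ) (fun τ _ => hv' τ) ht0mem
    · exact fun τ hτ => (hfnd m τ hτ).continuousWithinAt
    · intro τ hτ
      have hτm : τ ∈ Icc (t₀ - (m+1:ℝ)) (t₀ + (m+1:ℝ)) := Ioo_subset_Icc_self hτ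
      have := (hfnd m τ hτm).hasDerivAt (Icc_mem_nhds hτ.1 hτ.2)
      rwa [hclamp τ (hIccmono hmn hτm)]
    · exact fun τ _ => mem_univ _
    · exact fun τ hτ => ((hfnd n τ (hIccmono hmn hτ)).continuousWithinAt).mono
        (hIccmono hmn)
    · intro τ hτ
      have hτm : τ ∈ Icc (t₀ - (m+1:ℝ)) (t₀ + (m+1:ℝ)) := Ioo_subset_Icc_self hτ
      have hτn : τ ∈ Ioo (t₀ - (n+1:ℝ)) (t₀ + (n+1:ℝ)) :=
        ⟨by have := hτ.1; linarith, by have := hτ.2; linarith⟩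
      have := (hfnd n τ (hIccmono hmn hτm)).hasDerivAt (Icc_mem_nhds hτn.1 hτn.2)
      rwa [hclamp τ (hIccmono hmn hτm)]
    · exact fun τ _ => mem_univ _
    · rw [hfn0 m, hfn0 n]
  set N : ℝ → ℕ := fun t => ⌈|t - t₀|⌉₊ with hNdef
  set Y : ℝ → F := fun t => fn (N t) t with hYdef
  have hNt : ∀ t, |t - t₀| ≤ (N t : ℝ) := fun t => Nat.le_ceil _
  have htmem : ∀ t, t ∈ Icc (t₀ - ((N t):ℝ)-1) (t₀ + (N t) + 1) := by
    intro t
    have := hNt t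
    rw [abs_sub_le_iff] at this
    constructor <;> linarith [this.1, this.2]
  have key : ∀ (n : ℕ) (t : ℝ), t ∈ Icc (t₀ - (n+1:ℝ)) (t₀ + (n+1:ℝ)) → Y t = fn n t := by
    intro n t ht
    have htN : t ∈ Icc (t₀ - ((N t)+1:ℝ)) (t₀ + ((N t)+1:ℝ)) := by
      have := htmem t
      constructor <;> [(have := this.1; linarith); (have := this.2; linarith)]
    rcases le_total (N t) n with hc | hc
    · exact agree (N t) n hc htN
    · exact (agree n (N t) hc ht).symm
  refine ⟨Y, ?_, ?_⟩
  · have : Y t₀ = fn (N t₀) t₀ := rfl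
    rw [this, hfn0]
  · intro t
    set n := N t with hn
    have htIoo : t ∈ Ioo (t₀ - (n+1:ℝ)) (t₀ + (n+1:ℝ)) := by
      have h1 := hNt t
      rw [abs_sub_le_iff] at h1
      constructor <;> [(have := h1.2; linarith); (have := h1.1; linarith)]
    have hnb : Icc (t₀ - (n+1:ℝ)) (t₀ + (n+1:ℝ)) ∈ 𝓝 t := Icc_mem_nhds htIoo.1 htIoo.2
    have hda : HasDerivAt (fn n) (v t (fn n t)) t :=
      (hfnd n t (Ioo_subset_Icc_self htIoo)).hasDerivAt hnb
    have hev : Y =ᶠ[𝓝 t] fn n := by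
      filter_upwards [hnb] with s hs using key n s hs
    have hfin : HasDerivAt Y (v t (fn n t)) t := hda.congr_of_eventuallyEq hev
    rwa [← key n t (Ioo_subset_Icc_self htIoo)] at hfin


section exist

variable {h : ℝ → ℝ × ℝ → ℝ} {ρ : ℝ → ℝ}

/-- Global existence of solutions of the closed loop, via a truncated polar-coordinates
auxiliary system. -/
lemma exists_solution_cl3
    (hρmono : MonotoneOn ρ (Set.Ici 0)) (hρ0 : ρ 0 = 0) (hzero : ∀ t, h t 0 = 0)
    (hsmooth : ContDiff ℝ 2 (fun q : ℝ × (ℝ × ℝ) => h q.1 q.2))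
    (hb1 : ∀ (t : ℝ) (x23 : ℝ × ℝ),
      ‖fderiv ℝ (fun q : ℝ × (ℝ × ℝ) => h q.1 q.2) (t, x23)‖ ≤ ρ ‖x23‖)
    (t₀ : ℝ) (x₀ : ℝ × ℝ × ℝ) :
    ∃ x : ℝ → ℝ × ℝ × ℝ, x t₀ = x₀ ∧ IsSolution (cl3 h) t₀ x := by
  obtain ⟨a1, a2, a3⟩ := x₀
  set r : ℝ := Real.sqrt (a2^2 + a3^2) with hrdef
  have hr0 : 0 ≤ r := Real.sqrt_nonneg _
  have hρ2r : 0 ≤ ρ (2*r) := by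
    rw [← hρ0]
    exact hρmono (Set.mem_Ici.mpr le_rfl) (Set.mem_Ici.mpr (by linarith)) (by linarith)
  set K : ℝ := ρ (2*r) * (2*r) with hKdef
  have hK0 : 0 ≤ K := mul_nonneg hρ2r (by linarith)
  set M : ℝ := |a1| + 2*K + 1 with hMdef
  have hM0 : 0 < M := by
    have := abs_nonneg a1
    rw [hMdef]
    linarith
  set c : ℝ → ℝ := fun z => min (2*r) (max 0 z) with hcdef
  set cm : ℝ → ℝ := fun w => min M (max (-M) w) with hcmdef
  set w1 : ℝ × ℝ × ℝ → ℝ := fun y => c y.2.1 * Real.cos y.2.2 with hw1def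
  set w2 : ℝ × ℝ × ℝ → ℝ := fun y => c y.2.1 * Real.sin y.2.2 with hw2def
  set G : ℝ → ℝ × ℝ × ℝ → ℝ × ℝ × ℝ := fun t y =>
    (Real.exp t * h t (w1 y, w2 y),
     -(c y.2.1) * (Real.sin y.2.2)^2,
     -(cm (-(Real.exp (-t)) * y.1 + h t (w1 y, w2 y))) - Real.sin y.2.2 * Real.cos y.2.2)
    with hGdef
  -- basic facts about the clamps
  have hc_nonneg : ∀ z, 0 ≤ c z := fun z => le_min (by linarith) (le_max_left _ _)
  have hc_le : ∀ z, c z ≤ 2*r := fun z => min_le_left _ _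
  have hc_abs : ∀ z, |c z| ≤ 2*r := fun z => by
    rw [abs_of_nonneg (hc_nonneg z)]; exact hc_le z
  have hc_abs' : ∀ z, |c z| ≤ |z| := fun z => abs_clamp_le_abs (by linarith)
  have hcm_abs : ∀ w, |cm w| ≤ M := by
    intro w
    rw [abs_le]
    exact ⟨le_min (by linarith) (le_max_left _ _), min_le_left _ _⟩
  have hw1b : ∀ y, |w1 y| ≤ 2*r := by
    intro y
    calc |w1 y| = |c y.2.1| * |Real.cos y.2.2| := abs_mul _ _
      _ ≤ (2*r) * 1 :=
        mul_le_mul (hc_abs _) (Real.abs_cos_le_one _) (abs_nonneg _) (by linarith)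
      _ = 2*r := mul_one _
  have hw2b : ∀ y, |w2 y| ≤ 2*r := by
    intro y
    calc |w2 y| = |c y.2.1| * |Real.sin y.2.2| := abs_mul _ _
      _ ≤ (2*r) * 1 :=
        mul_le_mul (hc_abs _) (Real.abs_sin_le_one _) (abs_nonneg _) (by linarith)
      _ = 2*r := mul_one _
  have hwnorm : ∀ y, ‖(w1 y, w2 y)‖ ≤ 2*r := by
    intro y
    rw [Prod.norm_def, Real.norm_eq_abs, Real.norm_eq_abs]
    exact max_le (hw1b y) (hw2b y)
  have habs_h : ∀ (t : ℝ) y, |h t (w1 y, w2 y)| ≤ K := by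
    intro t y
    refine (h_abs_le hρmono hρ0 hzero hsmooth hb1 t _).trans ?_
    rw [hKdef]
    exact mul_le_mul (hρmono (Set.mem_Ici.mpr (norm_nonneg _)) (Set.mem_Ici.mpr (by linarith))
      (hwnorm y)) (hwnorm y) (norm_nonneg _) hρ2r
  -- Lipschitz data
  set Kw : ℝ := 2*r*1 + 1*1 with hKwdef
  have hKw0 : (0:ℝ) ≤ Kw := by rw [hKwdef]; linarith
  have hrw1 : RLip Kw w1 :=
    (rlip_snd_fst3.clamp 0 (2*r)).mul rlip_snd_snd3.cos_comp (fun y => hc_abs _)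
      (fun y => Real.abs_cos_le_one _)
  have hrw2 : RLip Kw w2 :=
    (rlip_snd_fst3.clamp 0 (2*r)).mul rlip_snd_snd3.sin_comp (fun y => hc_abs _)
      (fun y => Real.abs_sin_le_one _)
  have hhL : ∀ (t : ℝ), RLip (ρ (2*r) * Kw) (fun y => h t (w1 y, w2 y)) := by
    intro t x y
    have h1 := h_lipOn hρmono hρ0 hsmooth hb1 t (2*r) (by linarith)
      (w1 x, w2 x) (w1 y, w2 y) (hwnorm x) (hwnorm y)
    refine h1.trans ?_
    have h2 : ‖((w1 x, w2 x) : ℝ × ℝ) - (w1 y, w2 y)‖ ≤ Kw * dist x y := by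
      rw [Prod.mk_sub_mk, Prod.norm_def, Real.norm_eq_abs, Real.norm_eq_abs]
      exact max_le (hrw1 x y) (hrw2 x y)
    calc ρ (2*r) * ‖((w1 x, w2 x) : ℝ × ℝ) - (w1 y, w2 y)‖
        ≤ ρ (2*r) * (Kw * dist x y) := mul_le_mul_of_nonneg_left h2 hρ2r
      _ = (ρ (2*r) * Kw) * dist x y := by ring
  have hglip : ∀ A B : ℝ, ∃ L : NNReal, ∀ t ∈ Set.Icc A B, LipschitzWith L (G t) := by
    intro A B
    set L : ℝ := max (Real.exp B * (ρ (2*r) * Kw))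
      (max (2*r*(1*1 + 1*1) + 1*1) ((Real.exp (-A) * 1 + ρ (2*r) * Kw) + (1*1 + 1*1)))
      with hLdef
    refine ⟨L.toNNReal, fun t ht => ?_⟩
    have hnn : 0 ≤ ρ (2*r) * Kw := mul_nonneg hρ2r hKw0
    have e1 : RLip L (fun y : ℝ × ℝ × ℝ => Real.exp t * h t (w1 y, w2 y)) := by
      refine ((hhL t).const_mul (Real.exp t)).mono ?_
      rw [abs_of_pos (Real.exp_pos t)]
      have hexp : Real.exp t ≤ Real.exp B := Real.exp_le_exp.mpr ht.2
      calc Real.exp t * (ρ (2*r) * Kw) ≤ Real.exp B * (ρ (2*r) * Kw) := by nlinarith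
        _ ≤ L := le_max_left _ _
    have e2 : RLip L (fun y : ℝ × ℝ × ℝ => -(c y.2.1) * (Real.sin y.2.2)^2) := by
      have hmul : RLip (2*r*(1*1 + 1*1) + 1*1)
          (fun y : ℝ × ℝ × ℝ => (-(c y.2.1)) * (Real.sin y.2.2 * Real.sin y.2.2)) := by
        refine RLip.mul ?_ ?_ ?_ ?_
        · exact (rlip_snd_fst3.clamp 0 (2*r)).neg
        · exact rlip_snd_snd3.sin_comp.mul rlip_snd_snd3.sin_comp
            (fun y => Real.abs_sin_le_one _) (fun y => Real.abs_sin_le_one _)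
        · intro y; rw [abs_neg]; exact hc_abs _
        · intro y
          rw [abs_mul]
          exact mul_le_one₀ (Real.abs_sin_le_one _) (abs_nonneg _) (Real.abs_sin_le_one _)
      have heq : (fun y : ℝ × ℝ × ℝ => -(c y.2.1) * (Real.sin y.2.2)^2)
          = fun y : ℝ × ℝ × ℝ => (-(c y.2.1)) * (Real.sin y.2.2 * Real.sin y.2.2) := by
        funext y; ring
      rw [heq]
      exact hmul.mono ((le_max_left _ _).trans (le_max_right _ _))
    have e3 : RLip L (fun y : ℝ × ℝ × ℝ =>
        -(cm (-(Real.exp (-t)) * y.1 + h t (w1 y, w2 y))) - Real.sin y.2.2 * Real.cos y.2.2) := by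
      have hinner : RLip (|-(Real.exp (-t))| * 1 + ρ (2*r) * Kw)
          (fun y : ℝ × ℝ × ℝ => (-(Real.exp (-t))) * y.1 + h t (w1 y, w2 y)) :=
        (rlip_fst3.const_mul (-(Real.exp (-t)))).add (hhL t)
      have hclamp := (hinner.clamp (-M) M).neg
      have hsc : RLip (1*1 + 1*1) (fun y : ℝ × ℝ × ℝ => Real.sin y.2.2 * Real.cos y.2.2) :=
        rlip_snd_snd3.sin_comp.mul rlip_snd_snd3.cos_comp
          (fun y => Real.abs_sin_le_one _) (fun y => Real.abs_cos_le_one _)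
      have heq : (fun y : ℝ × ℝ × ℝ =>
          -(cm (-(Real.exp (-t)) * y.1 + h t (w1 y, w2 y))) - Real.sin y.2.2 * Real.cos y.2.2)
          = fun y : ℝ × ℝ × ℝ =>
          (-(min M (max (-M) ((-(Real.exp (-t))) * y.1 + h t (w1 y, w2 y)))))
            + (-(Real.sin y.2.2 * Real.cos y.2.2)) := by
        funext y
        rw [hcmdef]
        ring_nf
      rw [heq]
      refine (hclamp.add hsc.neg).mono ?_
      have h1 : |-(Real.exp (-t))| = Real.exp (-t) := by
        rw [abs_neg, abs_of_pos (Real.exp_pos _)]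
      have h2 : Real.exp (-t) ≤ Real.exp (-A) := Real.exp_le_exp.mpr (by linarith [ht.1])
      rw [h1]
      have : Real.exp (-t) * 1 + ρ (2*r) * Kw + (1*1 + 1*1)
          ≤ Real.exp (-A) * 1 + ρ (2*r) * Kw + (1*1 + 1*1) := by nlinarith
      exact this.trans ((le_max_right _ _).trans (le_max_right _ _))
    have l1 := e1.toLipschitzWith
    have l2 := e2.toLipschitzWith
    have l3 := e3.toLipschitzWith
    have hl := l1.prodMk (l2.prodMk l3)
    rw [max_self, max_self] at hl
    exact hl
  have hgbdd : ∀ A B : ℝ, ∃ C, 0 ≤ C ∧ ∀ t ∈ Set.Icc A B, ∀ y, ‖G t y‖ ≤ C := by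
    intro A B
    refine ⟨max (Real.exp B * K) (max (2*r) (M+1)),
      le_max_of_le_left (mul_nonneg (Real.exp_pos B).le hK0), fun t ht y => ?_⟩
    rw [Prod.norm_def, Prod.norm_def, Real.norm_eq_abs, Real.norm_eq_abs, Real.norm_eq_abs]
    refine max_le ?_ (max_le ?_ ?_)
    · refine le_max_of_le_left ?_
      calc |Real.exp t * h t (w1 y, w2 y)| = Real.exp t * |h t (w1 y, w2 y)| := by
            rw [abs_mul, abs_of_pos (Real.exp_pos t)]
        _ ≤ Real.exp B * K :=
            mul_le_mul (Real.exp_le_exp.mpr ht.2) (habs_h t y) (abs_nonneg _) (Real.exp_pos B).le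
    · refine le_max_of_le_right (le_max_of_le_left ?_)
      calc |-(c y.2.1) * (Real.sin y.2.2)^2| = |c y.2.1| * |(Real.sin y.2.2)^2| := by
            rw [abs_mul, abs_neg]
        _ ≤ (2*r) * 1 := by
            refine mul_le_mul (hc_abs _) ?_ (abs_nonneg _) (by linarith)
            rw [abs_of_nonneg (sq_nonneg _)]
            exact Real.sin_sq_le_one _
        _ = 2*r := mul_one _
    · refine le_max_of_le_right (le_max_of_le_right ?_)
      have h1 : |cm (-(Real.exp (-t)) * y.1 + h t (w1 y, w2 y))| ≤ M := hcm_abs _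
      have h2 : |Real.sin y.2.2 * Real.cos y.2.2| ≤ 1 := by
        rw [abs_mul]
        exact mul_le_one₀ (Real.abs_sin_le_one _) (abs_nonneg _) (Real.abs_cos_le_one _)
      calc |-(cm (-(Real.exp (-t)) * y.1 + h t (w1 y, w2 y)))
            - Real.sin y.2.2 * Real.cos y.2.2|
          ≤ |-(cm (-(Real.exp (-t)) * y.1 + h t (w1 y, w2 y)))|
            + |Real.sin y.2.2 * Real.cos y.2.2| := abs_sub _ _
        _ ≤ M + 1 := by rw [abs_neg]; exact add_le_add h1 h2
  have hhcont : Continuous (fun q : ℝ × (ℝ × ℝ) => h q.1 q.2) := hsmooth.continuous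
  have hcont1 : ∀ y : ℝ × ℝ, Continuous (fun t => h t y) := fun y =>
    hhcont.comp (continuous_id.prodMk continuous_const)
  have hgcont : ∀ y, Continuous fun t => G t y := by
    intro y
    refine Continuous.prodMk ?_ (Continuous.prodMk ?_ ?_)
    · exact Real.continuous_exp.mul (hcont1 _)
    · exact continuous_const
    · refine Continuous.sub ?_ continuous_const
      refine Continuous.neg ?_
      refine Continuous.min continuous_const (Continuous.max continuous_const ?_)
      exact ((Real.continuous_exp.comp continuous_neg).neg.mul continuous_const).add (hcont1 _)
  -- initial angle
  obtain ⟨φ₀, hφ01, hφ02⟩ : ∃ φ₀ : ℝ, r * Real.cos φ₀ = a2 ∧ r * Real.sin φ₀ = a3 := by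
    rcases eq_or_lt_of_le hr0 with hre | hrpos
    · have hsum : a2^2 + a3^2 = 0 := by
        nlinarith [Real.sq_sqrt (show (0:ℝ) ≤ a2^2 + a3^2 by positivity), hre.symm]
      have h2 : a2 = 0 := by nlinarith
      have h3 : a3 = 0 := by nlinarith
      exact ⟨0, by rw [← hre, h2]; ring, by rw [← hre, h3]; simp⟩
    · set ζ : ℂ := ⟨a2, a3⟩ with hζdef
      have habs : ‖ζ‖ = r := by
        rw [Complex.norm_def, Complex.normSq_mk, hrdef]
        ring_nf
      have hζ0 : ζ ≠ 0 := by
        intro hcontra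
        rw [hcontra, norm_zero] at habs
        linarith
      refine ⟨Complex.arg ζ, ?_, ?_⟩
      · rw [Complex.cos_arg hζ0, habs]
        have : ζ.re = a2 := rfl
        rw [this]
        field_simp
      · rw [Complex.sin_arg, habs]
        have : ζ.im = a3 := rfl
        rw [this]
        field_simp
  obtain ⟨Y, hY0, hYd⟩ := exists_global_solution G hglip hgbdd hgcont t₀
    (Real.exp t₀ * a1, r, φ₀)
  set z : ℝ → ℝ := fun t => (Y t).1 with hzdef
  set p : ℝ → ℝ := fun t => (Y t).2.1 with hpdef
  set φ : ℝ → ℝ := fun t => (Y t).2.2 with hφdef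
  have hzt₀ : z t₀ = Real.exp t₀ * a1 := by rw [hzdef]; simp only; rw [hY0]
  have hpt₀ : p t₀ = r := by rw [hpdef]; simp only; rw [hY0]
  have hφt₀ : φ t₀ = φ₀ := by rw [hφdef]; simp only; rw [hY0]
  have hz : ∀ t, HasDerivAt z (Real.exp t * h t (w1 (Y t), w2 (Y t))) t := by
    intro t
    exact (ContinuousLinearMap.fst ℝ ℝ (ℝ × ℝ)).hasFDerivAt.comp_hasDerivAt t (hYd t)
  have hp : ∀ t, HasDerivAt p (-(c (p t)) * (Real.sin (φ t))^2) t := by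
    intro t
    have h1 := (ContinuousLinearMap.snd ℝ ℝ (ℝ × ℝ)).hasFDerivAt.comp_hasDerivAt t (hYd t)
    exact (ContinuousLinearMap.fst ℝ ℝ ℝ).hasFDerivAt.comp_hasDerivAt t h1
  have hφd : ∀ t, HasDerivAt φ
      (-(cm (-(Real.exp (-t)) * z t + h t (w1 (Y t), w2 (Y t))))
        - Real.sin (φ t) * Real.cos (φ t)) t := by
    intro t
    have h1 := (ContinuousLinearMap.snd ℝ ℝ (ℝ × ℝ)).hasFDerivAt.comp_hasDerivAt t (hYd t)
    exact (ContinuousLinearMap.snd ℝ ℝ ℝ).hasFDerivAt.comp_hasDerivAt t h1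
  -- p stays in [0, r] for t ≥ t₀
  have hp_le : ∀ t, t₀ ≤ t → p t ≤ r := by
    have hanti : AntitoneOn p (Set.Ici t₀) := by
      refine antitoneOn_Ici_of_hasDerivAt_nonpos (fun t _ => hp t) (fun t _ => ?_)
      rw [neg_mul]
      exact neg_nonpos.mpr (mul_nonneg (hc_nonneg _) (sq_nonneg _))
    intro t ht
    have := hanti self_mem_Ici ht ht
    rwa [hpt₀] at this
  have hp_pos : ∀ t, t₀ ≤ t → 0 ≤ p t := by
    rcases eq_or_lt_of_le hr0 with hre | hrpos
    · have hc0 : ∀ u : ℝ, c u = 0 := by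
        intro u
        rw [hcdef]
        simp only
        rw [← hre]
        norm_num
      have hdiffp : Differentiable ℝ p := fun s => (hp s).differentiableAt
      have hconst : ∀ s u : ℝ, p s = p u := by
        apply is_const_of_deriv_eq_zero hdiffp
        intro s
        rw [(hp s).deriv, hc0]
        ring
      intro t ht
      rw [hconst t t₀, hpt₀, ← hre]
    · have hnz : ∀ T', t₀ ≤ T' → p T' ≠ 0 := by
        intro T' hT' hzero'
        set χ : ℝ → ℝ := fun u => p (t₀ + T' - u) with hχdef
        have hχd : ∀ u, HasDerivAt χ
            (c (χ u) * (Real.sin (φ (t₀ + T' - u)))^2) u := by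
          intro u
          have hσ : HasDerivAt (fun v : ℝ => t₀ + T' - v) (-1) u := by
            simpa using (hasDerivAt_id u).const_sub (t₀ + T')
          have hcomp := (hp (t₀ + T' - u)).comp u hσ
          refine hcomp.congr_deriv ?_
          rw [hχdef]
          ring
        have hbnd : ∀ u ∈ Set.Ico t₀ T',
            ‖c (χ u) * (Real.sin (φ (t₀ + T' - u)))^2‖ ≤ 1 * ‖χ u‖ + 0 := by
          intro u _
          rw [Real.norm_eq_abs, Real.norm_eq_abs]
          have hle : |c (χ u) * (Real.sin (φ (t₀ + T' - u)))^2| ≤ |χ u| := by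
            rw [abs_mul]
            calc |c (χ u)| * |(Real.sin (φ (t₀ + T' - u)))^2|
                ≤ |χ u| * 1 := by
                  refine mul_le_mul (hc_abs' _) ?_ (abs_nonneg _) (abs_nonneg _)
                  rw [abs_of_nonneg (sq_nonneg _)]
                  exact Real.sin_sq_le_one _
              _ = |χ u| := mul_one _
          linarith
        have hgr := norm_le_gronwallBound_of_norm_deriv_right_le (δ := ‖χ t₀‖) (K := 1) (ε := 0)
          (a := t₀) (b := T')
          (fun u _ => (hχd u).continuousAt.continuousWithinAt)
          (fun u _ => (hχd u).hasDerivWithinAt)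
          le_rfl hbnd T' ⟨hT', le_rfl⟩
        have hchiT : χ T' = r := by
          rw [hχdef]
          simp only
          have he : t₀ + T' - T' = t₀ := by ring
          rw [he, hpt₀]
        have hchit₀ : χ t₀ = 0 := by
          rw [hχdef]
          simp only
          have he : t₀ + T' - t₀ = T' := by ring
          rw [he, hzero']
        rw [hchiT, hchit₀, gronwallBound_ε0] at hgr
        simp only [Real.norm_eq_abs, abs_zero, zero_mul] at hgr
        rw [abs_of_nonneg hr0] at hgr
        linarith
      intro T hT
      by_contra hneg
      push_neg at hneg
      have hcont : ContinuousOn p (Set.Icc t₀ T) :=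
        fun s _ => (hp s).continuousAt.continuousWithinAt
      have hivt := intermediate_value_Icc' hT hcont
      have h0mem : (0:ℝ) ∈ Set.Icc (p T) (p t₀) := by
        constructor
        · exact hneg.le
        · rw [hpt₀]; exact hrpos.le
      obtain ⟨s, hs, hps⟩ := hivt h0mem
      exact hnz s hs.1 hps
  have hcp : ∀ t, t₀ ≤ t → c (p t) = p t := by
    intro t ht
    rw [hcdef]
    exact clamp_eq (hp_pos t ht) ((hp_le t ht).trans (by linarith))
  -- the x₁ component
  set x1 : ℝ → ℝ := fun t => Real.exp (-t) * z t with hx1def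
  have hx1d : ∀ t, HasDerivAt x1 (-x1 t + h t (w1 (Y t), w2 (Y t))) t := by
    intro t
    have hexp : HasDerivAt (fun u : ℝ => Real.exp (-u)) (-Real.exp (-t)) t := by
      exact ((Real.hasDerivAt_exp (-t)).comp t (hasDerivAt_neg t)).congr_deriv (by ring)
    have hmul := hexp.mul (hz t)
    refine hmul.congr_deriv ?_
    rw [hx1def]
    simp only
    rw [Real.exp_neg]
    field_simp
  have hx1t₀ : x1 t₀ = a1 := by
    rw [hx1def]
    simp only
    rw [hzt₀, Real.exp_neg]
    field_simp
  have hwY1 : ∀ t, t₀ ≤ t → w1 (Y t) = p t * Real.cos (φ t) := by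
    intro t ht
    rw [hw1def]
    simp only
    rw [show (Y t).2.1 = p t from rfl, show (Y t).2.2 = φ t from rfl, hcp t ht]
  have hwY2 : ∀ t, t₀ ≤ t → w2 (Y t) = p t * Real.sin (φ t) := by
    intro t ht
    rw [hw2def]
    simp only
    rw [show (Y t).2.1 = p t from rfl, show (Y t).2.2 = φ t from rfl, hcp t ht]
  have hηb : ∀ t, t₀ ≤ t → |h t (w1 (Y t), w2 (Y t))| ≤ K := fun t _ => habs_h t (Y t)
  have hx1b : ∀ t, t₀ ≤ t → |x1 t| ≤ |a1| + K := by
    have hdb := decay_bound hK0 (fun t _ => hx1d t) hηb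
    intro t ht
    have := hdb t ht
    rwa [hx1t₀] at this
  have hcm_eq : ∀ t, t₀ ≤ t →
      cm (-(Real.exp (-t)) * z t + h t (w1 (Y t), w2 (Y t)))
        = -x1 t + h t (w1 (Y t), w2 (Y t)) := by
    intro t ht
    have he : -(Real.exp (-t)) * z t = -x1 t := by rw [hx1def]; ring
    rw [he]
    have habs : |(-x1 t + h t (w1 (Y t), w2 (Y t)))| ≤ M := by
      calc |(-x1 t + h t (w1 (Y t), w2 (Y t)))|
          ≤ |x1 t| + |h t (w1 (Y t), w2 (Y t))| := by
            refine (abs_add_le _ _).trans ?_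
            rw [abs_neg]
        _ ≤ (|a1| + K) + K := add_le_add (hx1b t ht) (hηb t ht)
        _ ≤ M := by rw [hMdef]; linarith
    obtain ⟨hl, hr'⟩ := abs_le.mp habs
    rw [hcmdef]
    exact clamp_eq hl hr'
  refine ⟨fun t => (x1 t, p t * Real.cos (φ t), p t * Real.sin (φ t)), ?_, ?_⟩
  · simp only
    rw [hx1t₀, hpt₀, hφt₀, hφ01, hφ02]
  · intro t ht
    have hw1Y := hwY1 t ht
    have hw2Y := hwY2 t ht
    set u : ℝ := -x1 t + h t (p t * Real.cos (φ t), p t * Real.sin (φ t)) with hudef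
    have hφ' : HasDerivAt φ (-u - Real.sin (φ t) * Real.cos (φ t)) t := by
      have hd := hφd t
      rw [hcm_eq t ht, hw1Y, hw2Y] at hd
      exact hd
    have hp' : HasDerivAt p (-(p t) * (Real.sin (φ t))^2) t := by
      have hd := hp t
      rwa [hcp t ht] at hd
    have H1 : HasDerivAt x1 (-x1 t + h t (p t * Real.cos (φ t), p t * Real.sin (φ t))) t := by
      have hd := hx1d t
      rwa [hw1Y, hw2Y] at hd
    have H2 : HasDerivAt (fun s => p s * Real.cos (φ s)) (u * (p t * Real.sin (φ t))) t := by
      have hcos : HasDerivAt (fun s => Real.cos (φ s))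
          (-Real.sin (φ t) * (-u - Real.sin (φ t) * Real.cos (φ t))) t :=
        (Real.hasDerivAt_cos (φ t)).comp t hφ'
      have hmul := hp'.mul hcos
      refine hmul.congr_deriv ?_
      ring
    have H3 : HasDerivAt (fun s => p s * Real.sin (φ s))
        (-(p t * Real.sin (φ t)) - u * (p t * Real.cos (φ t))) t := by
      have hsin : HasDerivAt (fun s => Real.sin (φ s))
          (Real.cos (φ t) * (-u - Real.sin (φ t) * Real.cos (φ t))) t :=
        (Real.hasDerivAt_sin (φ t)).comp t hφ'
      have hmul := hp'.mul hsin
      refine hmul.congr_deriv ?_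
      have hsc := Real.sin_sq_add_cos_sq (φ t)
      linear_combination -(p t * Real.sin (φ t)) * hsc
    have hprod := H1.prodMk (H2.prodMk H3)
    exact hprod

end exist

end Chained3

/-- **Uniform global stability of the 3-state closed loop**: (a) the energy function
`V₁ = ½‖x₂₃‖²` decreases along solutions with `V̇₁ ≤ -x₃²`, hence `‖x₂₃(t)‖` is
nonincreasing; (b) `‖x₁(t)‖ ≤ ‖x₁(t₀)‖ + ρ̄(‖x₂₃(t₀)‖)`; (c) solutions exist globally
and the origin is UGS. -/
theorem chained_3state_UGS (h : ℝ → ℝ × ℝ → ℝ) (ρ : ℝ → ℝ)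
    (hρcont : ContinuousOn ρ (Set.Ici 0)) (hρmono : MonotoneOn ρ (Set.Ici 0))
    (hρ0 : ρ 0 = 0)
    (hzero : ∀ t, h t 0 = 0)
    (hsmooth : ContDiff ℝ 2 (fun q : ℝ × (ℝ × ℝ) => h q.1 q.2))
    (hbound : ∀ (t : ℝ) (x23 : ℝ × ℝ),
      ‖fderiv ℝ (fun q : ℝ × (ℝ × ℝ) => h q.1 q.2) (t, x23)‖ ≤ ρ ‖x23‖ ∧
      ‖fderiv ℝ (fderiv ℝ (fun q : ℝ × (ℝ × ℝ) => h q.1 q.2)) (t, x23)‖ ≤ ρ ‖x23‖) :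
    -- (a) V̇₁ ≤ -x₃² ≤ 0 along solutions, hence ‖x₂₃(t)‖ ≤ ‖x₂₃(t₀)‖
    (∀ t₀ x, IsSolution (cl3 h) t₀ x →
      (∀ t, t₀ ≤ t → ∃ d : ℝ,
        HasDerivAt (fun s => (1 / 2 : ℝ) * (((x s).2.1) ^ 2 + ((x s).2.2) ^ 2)) d t ∧
        d ≤ -((x t).2.2) ^ 2 ∧ d ≤ 0) ∧
      (∀ t, t₀ ≤ t →
        Real.sqrt (((x t).2.1) ^ 2 + ((x t).2.2) ^ 2) ≤
          Real.sqrt (((x t₀).2.1) ^ 2 + ((x t₀).2.2) ^ 2))) ∧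
    -- (b) a uniform bound on x₁ along solutions
    (∃ ρbar : ℝ → ℝ, ContinuousOn ρbar (Set.Ici 0) ∧ MonotoneOn ρbar (Set.Ici 0) ∧
      ρbar 0 = 0 ∧
      ∀ t₀ x, IsSolution (cl3 h) t₀ x → ∀ t, t₀ ≤ t →
        |(x t).1| ≤ |(x t₀).1| + ρbar (Real.sqrt (((x t₀).2.1) ^ 2 + ((x t₀).2.2) ^ 2))) ∧
    -- (c) global existence of solutions and uniform global stability of the origin
    (∀ (t₀ : ℝ) (x₀ : ℝ × ℝ × ℝ), ∃ x : ℝ → ℝ × ℝ × ℝ, x t₀ = x₀ ∧ IsSolution (cl3 h) t₀ x) ∧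
    UGS (cl3 h) := by
  have hb1 : ∀ (t : ℝ) (x23 : ℝ × ℝ),
      ‖fderiv ℝ (fun q : ℝ × (ℝ × ℝ) => h q.1 q.2) (t, x23)‖ ≤ ρ ‖x23‖ :=
    fun t x23 => (hbound t x23).1
  have hρnonneg : ∀ s : ℝ, 0 ≤ s → 0 ≤ ρ s := by
    intro s hs
    rw [← hρ0]
    exact hρmono (Set.mem_Ici.mpr le_rfl) (Set.mem_Ici.mpr hs) hs
  -- component derivatives of any solution
  have hcomp : ∀ (t₀ : ℝ) (x : ℝ → ℝ × ℝ × ℝ), IsSolution (cl3 h) t₀ x → ∀ t, t₀ ≤ t →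
      HasDerivAt (fun s => (x s).1) (-(x t).1 + h t ((x t).2.1, (x t).2.2)) t ∧
      HasDerivAt (fun s => (x s).2.1)
        ((-(x t).1 + h t ((x t).2.1, (x t).2.2)) * (x t).2.2) t ∧
      HasDerivAt (fun s => (x s).2.2)
        (-(x t).2.2 - (-(x t).1 + h t ((x t).2.1, (x t).2.2)) * (x t).2.1) t := by
    intro t₀ x hx t ht
    have hd := hx t ht
    refine ⟨?_, ?_, ?_⟩
    · exact (ContinuousLinearMap.fst ℝ ℝ (ℝ × ℝ)).hasFDerivAt.comp_hasDerivAt t hd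
    · have h1 := (ContinuousLinearMap.snd ℝ ℝ (ℝ × ℝ)).hasFDerivAt.comp_hasDerivAt t hd
      exact (ContinuousLinearMap.fst ℝ ℝ ℝ).hasFDerivAt.comp_hasDerivAt t h1
    · have h1 := (ContinuousLinearMap.snd ℝ ℝ (ℝ × ℝ)).hasFDerivAt.comp_hasDerivAt t hd
      exact (ContinuousLinearMap.snd ℝ ℝ ℝ).hasFDerivAt.comp_hasDerivAt t h1
  -- the energy derivative
  have partA : ∀ (t₀ : ℝ) (x : ℝ → ℝ × ℝ × ℝ), IsSolution (cl3 h) t₀ x → ∀ t, t₀ ≤ t →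
      HasDerivAt (fun s => (1 / 2 : ℝ) * (((x s).2.1) ^ 2 + ((x s).2.2) ^ 2))
        (-((x t).2.2) ^ 2) t := by
    intro t₀ x hx t ht
    obtain ⟨_, h2, h3⟩ := hcomp t₀ x hx t ht
    have hsq1 := h2.pow 2
    have hsq2 := h3.pow 2
    have hfin := (hsq1.add hsq2).const_mul (1/2 : ℝ)
    refine hfin.congr_deriv ?_
    ring
  -- monotonicity of the energy
  have partA2 : ∀ (t₀ : ℝ) (x : ℝ → ℝ × ℝ × ℝ), IsSolution (cl3 h) t₀ x → ∀ t, t₀ ≤ t →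
      ((x t).2.1)^2 + ((x t).2.2)^2 ≤ ((x t₀).2.1)^2 + ((x t₀).2.2)^2 := by
    intro t₀ x hx t ht
    have hanti := Chained3.antitoneOn_Ici_of_hasDerivAt_nonpos
      (f := fun s => (1/2 : ℝ) * (((x s).2.1)^2 + ((x s).2.2)^2))
      (g := fun t => -((x t).2.2)^2)
      (fun t ht => partA t₀ x hx t ht)
      (fun t _ => neg_nonpos.mpr (sq_nonneg _))
    have := hanti self_mem_Ici ht ht
    linarith
  set ρbar : ℝ → ℝ := fun s => ρ s * s with hρbardef
  have hρbar_nonneg : ∀ s : ℝ, 0 ≤ s → 0 ≤ ρbar s := fun s hs =>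
    mul_nonneg (hρnonneg s hs) hs
  have hρbar_mono : MonotoneOn ρbar (Set.Ici 0) := by
    intro a ha b hb hab
    simp only [hρbardef]
    exact mul_le_mul (hρmono ha hb hab) hab ha (hρnonneg b hb)
  -- bound on the (2,3)-norm along solutions
  have hnorm23 : ∀ (t₀ : ℝ) (x : ℝ → ℝ × ℝ × ℝ), IsSolution (cl3 h) t₀ x → ∀ t, t₀ ≤ t →
      ‖((x t).2.1, (x t).2.2)‖ ≤ Real.sqrt (((x t₀).2.1)^2 + ((x t₀).2.2)^2) := by
    intro t₀ x hx t ht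
    rw [Prod.norm_def, Real.norm_eq_abs, Real.norm_eq_abs]
    have hsq := partA2 t₀ x hx t ht
    have e1 : |(x t).2.1| ≤ Real.sqrt (((x t).2.1)^2 + ((x t).2.2)^2) := by
      rw [← Real.sqrt_sq_eq_abs]
      exact Real.sqrt_le_sqrt (by nlinarith [sq_nonneg ((x t).2.2)])
    have e2 : |(x t).2.2| ≤ Real.sqrt (((x t).2.1)^2 + ((x t).2.2)^2) := by
      rw [← Real.sqrt_sq_eq_abs]
      exact Real.sqrt_le_sqrt (by nlinarith [sq_nonneg ((x t).2.1)])
    have e3 : Real.sqrt (((x t).2.1)^2 + ((x t).2.2)^2)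
        ≤ Real.sqrt (((x t₀).2.1)^2 + ((x t₀).2.2)^2) := Real.sqrt_le_sqrt hsq
    exact max_le (e1.trans e3) (e2.trans e3)
  -- part (b)
  have partB : ∀ (t₀ : ℝ) (x : ℝ → ℝ × ℝ × ℝ), IsSolution (cl3 h) t₀ x → ∀ t, t₀ ≤ t →
      |(x t).1| ≤ |(x t₀).1| + ρbar (Real.sqrt (((x t₀).2.1)^2 + ((x t₀).2.2)^2)) := by
    intro t₀ x hx
    set R0 : ℝ := Real.sqrt (((x t₀).2.1)^2 + ((x t₀).2.2)^2) with hR0def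
    have hR00 : 0 ≤ R0 := Real.sqrt_nonneg _
    refine Chained3.decay_bound (η := fun t => h t ((x t).2.1, (x t).2.2))
      (hρbar_nonneg R0 hR00) (fun t ht => (hcomp t₀ x hx t ht).1) ?_
    intro t ht
    have hb := Chained3.h_abs_le hρmono hρ0 hzero hsmooth hb1 t ((x t).2.1, (x t).2.2)
    have hn := hnorm23 t₀ x hx t ht
    refine hb.trans ?_
    calc ρ ‖((x t).2.1, (x t).2.2)‖ * ‖((x t).2.1, (x t).2.2)‖
        ≤ ρ R0 * R0 :=
          mul_le_mul (hρmono (Set.mem_Ici.mpr (norm_nonneg _)) (Set.mem_Ici.mpr hR00) hn) hn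
            (norm_nonneg _) (hρnonneg R0 hR00)
      _ = ρbar R0 := rfl
  refine ⟨?_, ⟨ρbar, hρcont.mul continuousOn_id, hρbar_mono, by simp [hρbardef, hρ0], partB⟩,
    Chained3.exists_solution_cl3 hρmono hρ0 hzero hsmooth hb1, ?_⟩
  · -- part (a)
    intro t₀ x hx
    constructor
    · intro t ht
      exact ⟨-((x t).2.2)^2, partA t₀ x hx t ht, le_rfl, neg_nonpos.mpr (sq_nonneg _)⟩
    · intro t ht
      exact Real.sqrt_le_sqrt (partA2 t₀ x hx t ht)
  · -- UGS
    set γ : ℝ → ℝ := fun s => 2*s + ρbar (2*s) with hγdef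
    have hγ0 : γ 0 = 0 := by simp [hγdef, hρbardef, hρ0]
    refine ⟨γ, ⟨?_, ?_, hγ0, ?_⟩, ?_⟩
    · -- continuity
      have c1 : ContinuousOn (fun s : ℝ => 2*s) (Set.Ici 0) :=
        (continuous_const.mul continuous_id).continuousOn
      have cρbar : ContinuousOn ρbar (Set.Ici 0) := hρcont.mul continuousOn_id
      have c2 : ContinuousOn (fun s : ℝ => ρbar (2*s)) (Set.Ici 0) := by
        refine cρbar.comp c1 ?_
        intro s hs
        have : (0:ℝ) ≤ s := hs
        exact Set.mem_Ici.mpr (by linarith)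
      exact c1.add c2
    · -- strict monotonicity
      intro a ha b hb hab
      have h2a : (2*a : ℝ) ∈ Set.Ici (0:ℝ) := Set.mem_Ici.mpr (by have : (0:ℝ) ≤ a := ha; linarith)
      have h2b : (2*b : ℝ) ∈ Set.Ici (0:ℝ) := Set.mem_Ici.mpr (by have : (0:ℝ) ≤ b := hb; linarith)
      have := hρbar_mono h2a h2b (by linarith)
      simp only [hγdef]
      linarith
    · -- tendsto atTop
      refine tendsto_atTop_mono' atTop (f₁ := fun s : ℝ => 2*s) ?_ ?_
      · filter_upwards [eventually_ge_atTop (0:ℝ)] with s hs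
        have : 0 ≤ ρbar (2*s) := hρbar_nonneg _ (by linarith)
        simp only [hγdef]
        linarith
      · exact Tendsto.const_mul_atTop (by norm_num) tendsto_id
    · -- the UGS bound
      intro t₀ x hx t ht
      have hnormeq : ∀ w : ℝ × ℝ × ℝ, ‖w‖ = max |w.1| (max |w.2.1| |w.2.2|) := by
        intro w
        rw [Prod.norm_def, Prod.norm_def, Real.norm_eq_abs, Real.norm_eq_abs, Real.norm_eq_abs]
      set s0 : ℝ := ‖x t₀‖ with hs0def
      have hs00 : 0 ≤ s0 := norm_nonneg _
      have h1b : |(x t₀).1| ≤ s0 := by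
        rw [hs0def, hnormeq]; exact le_max_left _ _
      have h2b : |(x t₀).2.1| ≤ s0 := by
        rw [hs0def, hnormeq]; exact le_max_of_le_right (le_max_left _ _)
      have h3b : |(x t₀).2.2| ≤ s0 := by
        rw [hs0def, hnormeq]; exact le_max_of_le_right (le_max_right _ _)
      set R0 : ℝ := Real.sqrt (((x t₀).2.1)^2 + ((x t₀).2.2)^2) with hR0def
      have hR00 : 0 ≤ R0 := Real.sqrt_nonneg _
      have hR0le : R0 ≤ 2*s0 := by
        rw [hR0def]
        have : ((x t₀).2.1)^2 + ((x t₀).2.2)^2 ≤ (2*s0)^2 := by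
          have q1 : ((x t₀).2.1)^2 ≤ s0^2 := by nlinarith [abs_nonneg ((x t₀).2.1), sq_abs ((x t₀).2.1)]
          have q2 : ((x t₀).2.2)^2 ≤ s0^2 := by nlinarith [abs_nonneg ((x t₀).2.2), sq_abs ((x t₀).2.2)]
          nlinarith
        calc Real.sqrt (((x t₀).2.1)^2 + ((x t₀).2.2)^2) ≤ Real.sqrt ((2*s0)^2) :=
              Real.sqrt_le_sqrt this
          _ = 2*s0 := Real.sqrt_sq (by linarith)
      have hρR : ρbar R0 ≤ ρbar (2*s0) :=
        hρbar_mono (Set.mem_Ici.mpr hR00) (Set.mem_Ici.mpr (by linarith)) hR0le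
      have hρ2s0 : 0 ≤ ρbar (2*s0) := hρbar_nonneg _ (by linarith)
      -- componentwise bounds at time t
      have b1 : |(x t).1| ≤ γ s0 := by
        have := partB t₀ x hx t ht
        simp only [hγdef]
        rw [← hR0def] at this
        linarith
      have hn23 := hnorm23 t₀ x hx t ht
      rw [Prod.norm_def, Real.norm_eq_abs, Real.norm_eq_abs, ← hR0def] at hn23
      have b2 : |(x t).2.1| ≤ γ s0 := by
        have := (le_max_left |(x t).2.1| |(x t).2.2|).trans hn23
        simp only [hγdef]
        linarith
      have b3 : |(x t).2.2| ≤ γ s0 := by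
        have := (le_max_right |(x t).2.1| |(x t).2.2|).trans hn23
        simp only [hγdef]
        linarith
      rw [hnormeq (x t)]
      exact max_le b1 (max_le b2 b3)
end
end

section
/- Claim 1 (uniform negative definiteness of the last auxiliary bound): Let Δ, μ > 0, let j ≥ 1 be an integer, and let Y_i : ℝⁿ × ℝ^m → ℝ (i = 1,…,j) be continuous functions satisfying: for each k ∈ {1,…,j}, whenever (z,ψ) ∈ B(Δ) × B(μ) and Y_i(z,ψ) = 0 for all i ∈ {1,…,k−1}, then Y_k(z,ψ) ≤ 0; and whenever (z,ψ) ∈ B(Δ) × B(μ) and Y_i(z,ψ) = 0 for all i ∈ {1,…,j}, then z = 0. Then for each δ ∈ (0,Δ] there exists ε > 0 such that every (z,ψ) ∈ H(δ,Δ) × B(μ) with Y_i(z,ψ) = 0 for all i ∈ {1,…,j−1} satisfies Y_j(z,ψ) ≤ −ε. -/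
/-!
On the compact set of points of `H(δ,Δ) × B(μ)` where `Y₁, …, Y_{j-1}` vanish, `Y_j` is
nonpositive by the nested sign condition, and it cannot vanish there, since then all the `Yᵢ`
would vanish and joint definiteness would force `z = 0`, outside the annulus. A continuous
function that is strictly negative on a compact set is bounded away from `0` there.
-/

open Metric Set

theorem IsCompact.exists_pos_forall_le_neg {X : Type*} [TopologicalSpace X] {s : Set X}
    (hs : IsCompact s) {f : X → ℝ} (hf : ContinuousOn f s) (hneg : ∀ x ∈ s, f x < 0) :
    ∃ ε, 0 < ε ∧ ∀ x ∈ s, f x ≤ -ε := by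
  obtain ⟨ε, hε, hle⟩ := hs.exists_forall_le' hf.neg fun x hx => neg_pos.2 (hneg x hx)
  exact ⟨ε, hε, fun x hx => le_neg_of_le_neg (hle x hx)⟩

theorem isClosed_setOf_forall_imp_eq_zero {X ι Z : Type*} [TopologicalSpace X]
    [TopologicalSpace Z] [T1Space Z] [Zero Z] (p : ι → Prop) {f : ι → X → Z}
    (hf : ∀ i, Continuous (f i)) : IsClosed {x | ∀ i, p i → f i x = 0} := by
  simp only [ofPred_forall]
  exact isClosed_iInter fun i => isClosed_iInter fun _ => isClosed_singleton.preimage (hf i)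

/-- Indices are zero-based: `Y ⟨0, _⟩, …, Y ⟨j - 1, _⟩` are the paper's `Y₁, …, Y_j`. -/
theorem claim1 (n m j : ℕ) (hj : 1 ≤ j) (Δ μ : ℝ)
    (Y : Fin j → (Fin n → ℝ) → (Fin m → ℝ) → ℝ)
    (hYcont : ∀ i, Continuous fun q : (Fin n → ℝ) × (Fin m → ℝ) => Y i q.1 q.2)
    -- Assumption 3: nested sign condition
    (h3 : ∀ k : Fin j, ∀ (z : Fin n → ℝ) (ψ : Fin m → ℝ), ‖z‖ ≤ Δ → ‖ψ‖ ≤ μ →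
      (∀ i, i < k → Y i z ψ = 0) → Y k z ψ ≤ 0)
    -- Assumption 4: joint definiteness
    (h4 : ∀ (z : Fin n → ℝ) (ψ : Fin m → ℝ), ‖z‖ ≤ Δ → ‖ψ‖ ≤ μ →
      (∀ i, Y i z ψ = 0) → z = 0) :
    ∀ δ : ℝ, 0 < δ → δ ≤ Δ → ∃ ε : ℝ, 0 < ε ∧
      ∀ (z : Fin n → ℝ) (ψ : Fin m → ℝ), δ ≤ ‖z‖ → ‖z‖ ≤ Δ → ‖ψ‖ ≤ μ →
        (∀ i : Fin j, i.val + 1 < j → Y i z ψ = 0) →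
        Y ⟨j - 1, by omega⟩ z ψ ≤ -ε := by
  intro δ hδ _
  set K := ((closedBall 0 Δ \ ball 0 δ) ×ˢ closedBall 0 μ) ∩
    {q : (Fin n → ℝ) × (Fin m → ℝ) | ∀ i : Fin j, i.val + 1 < j → Y i q.1 q.2 = 0}
  have hK : IsCompact K :=
    (((isCompact_closedBall 0 Δ).diff isOpen_ball).prod (isCompact_closedBall 0 μ)).inter_right
      (isClosed_setOf_forall_imp_eq_zero _ hYcont)
  have hneg : ∀ q ∈ K, Y ⟨j - 1, by omega⟩ q.1 q.2 < 0 := by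
    rintro ⟨z, ψ⟩ ⟨⟨⟨hzΔ, hzδ⟩, hψ⟩, hprev⟩
    rw [mem_closedBall_zero_iff] at hzΔ hψ
    rw [mem_ball_zero_iff, not_lt] at hzδ
    refine (h3 _ z ψ hzΔ hψ fun i hi => hprev i (by rw [Fin.lt_def] at hi; omega)).lt_of_ne
      fun hlast => ?_
    have hall : ∀ i, Y i z ψ = 0 := fun i => by
      by_cases hi : i.val + 1 < j
      · exact hprev i hi
      · rwa [show i = ⟨j - 1, by omega⟩ from Fin.ext (by simp only; omega)]
    have hz := h4 z ψ hzΔ hψ hall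
    rw [hz, norm_zero] at hzδ
    exact hδ.not_ge hzδ
  obtain ⟨ε, hε, hle⟩ := hK.exists_pos_forall_le_neg (hYcont _).continuousOn hneg
  refine ⟨ε, hε, fun z ψ hδz hzΔ hψ hprev => hle (z, ψ) ⟨⟨⟨?_, ?_⟩, ?_⟩, hprev⟩⟩
  · exact mem_closedBall_zero_iff.2 hzΔ
  · exact fun h => (mem_ball_zero_iff.1 h).not_ge hδz
  · exact mem_closedBall_zero_iff.2 hψ
end

section
/- Claim 2 (trading an implication for a combined bound): Let Δ, μ > 0, δ ∈ (0,Δ], let j ≥ 2 be an integer, let ℓ ∈ {2,…,j}, let ε̃ > 0, and let Y_i : ℝⁿ × ℝ^m → ℝ (i = 1,…,j) be continuous functions satisfying: for each k ∈ {1,…,j}, whenever (z,ψ) ∈ B(Δ) × B(μ) and Y_i(z,ψ) = 0 for all i ∈ {1,…,k−1}, then Y_k(z,ψ) ≤ 0. Let Ỹ_ℓ : ℝⁿ × ℝ^m → ℝ be continuous and suppose that every (z,ψ) ∈ H(δ,Δ) × B(μ) with Y_i(z,ψ) = 0 for all i ∈ {1,…,ℓ−1} satisfies Ỹ_ℓ(z,ψ)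 ≤ −ε̃. Then there exists K_{ℓ−1} > 0 such that every (z,ψ) ∈ H(δ,Δ) × B(μ) with Y_i(z,ψ) = 0 for all i ∈ {1,…,ℓ−2} satisfies K_{ℓ−1} Y_{ℓ−1}(z,ψ) + Ỹ_ℓ(z,ψ) ≤ −ε̃/2. -/
noncomputable section

/-- **Claim 2**: trading an implication for a combined bound. Indices are one-based
in the informal statement; here `Y ⟨i-1⟩` corresponds to `Y_i`, so `Y_{ℓ-1}` is
`Y ⟨l-2⟩`, "`Y_i = 0` for `i ∈ {1,…,ℓ-1}`" is "`Y i = 0` for `i.val + 1 < l`", and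
"`Y_i = 0` for `i ∈ {1,…,ℓ-2}`" is "`Y i = 0` for `i.val + 2 < l`". -/
theorem claim2 (n m j : ℕ) (hj : 2 ≤ j) (Δ μ δ : ℝ) (hΔ : 0 < Δ) (hμ : 0 < μ)
    (hδ : 0 < δ) (hδΔ : δ ≤ Δ)
    (l : ℕ) (hl2 : 2 ≤ l) (hlj : l ≤ j) (ε : ℝ) (hε : 0 < ε)
    (Y : Fin j → (Fin n → ℝ) → (Fin m → ℝ) → ℝ)
    (hYcont : ∀ i, Continuous fun q : (Fin n → ℝ) × (Fin m → ℝ) => Y i q.1 q.2)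
    (Yt : (Fin n → ℝ) → (Fin m → ℝ) → ℝ)
    (hYtcont : Continuous fun q : (Fin n → ℝ) × (Fin m → ℝ) => Yt q.1 q.2)
    -- Assumption 3: nested sign condition
    (h3 : ∀ k : Fin j, ∀ (z : Fin n → ℝ) (ψ : Fin m → ℝ), ‖z‖ ≤ Δ → ‖ψ‖ ≤ μ →
      (∀ i, i < k → Y i z ψ = 0) → Y k z ψ ≤ 0)
    -- Property 1: (A) implies (B)
    (h1 : ∀ (z : Fin n → ℝ) (ψ : Fin m → ℝ), δ ≤ ‖z‖ → ‖z‖ ≤ Δ → ‖ψ‖ ≤ μ →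
      (∀ i : Fin j, i.val + 1 < l → Y i z ψ = 0) → Yt z ψ ≤ -ε) :
    -- Property 2: a combined bound
    ∃ K : ℝ, 0 < K ∧
      ∀ (z : Fin n → ℝ) (ψ : Fin m → ℝ), δ ≤ ‖z‖ → ‖z‖ ≤ Δ → ‖ψ‖ ≤ μ →
        (∀ i : Fin j, i.val + 2 < l → Y i z ψ = 0) →
        K * Y ⟨l - 2, by omega⟩ z ψ + Yt z ψ ≤ -ε / 2 := by
  set X := (Fin n → ℝ) × (Fin m → ℝ)
  set f : X → ℝ := fun q => Y ⟨l - 2, by omega⟩ q.1 q.2 with hf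
  have hfcont : Continuous f := hYcont _
  set S : Set X := {q | δ ≤ ‖q.1‖} ∩ {q | ‖q.1‖ ≤ Δ} ∩ {q | ‖q.2‖ ≤ μ} ∩
      ⋂ (i : Fin j) (_ : i.val + 2 < l), {q | Y i q.1 q.2 = 0} with hS
  have hSmem : ∀ q : X, q ∈ S ↔ (δ ≤ ‖q.1‖ ∧ ‖q.1‖ ≤ Δ ∧ ‖q.2‖ ≤ μ ∧
      ∀ i : Fin j, i.val + 2 < l → Y i q.1 q.2 = 0) := by
    intro q
    simp only [hS, Set.mem_inter_iff, Set.mem_iInter, Set.mem_setOf_eq]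
    tauto
  have hScl : IsClosed S := by
    refine (((isClosed_le continuous_const (continuous_norm.comp continuous_fst)).inter
      (isClosed_le (continuous_norm.comp continuous_fst) continuous_const)).inter
      (isClosed_le (continuous_norm.comp continuous_snd) continuous_const)).inter ?_
    exact isClosed_iInter fun i => isClosed_iInter fun _ =>
      isClosed_eq (hYcont i) continuous_const
  have hSb : Bornology.IsBounded S := by
    apply (Metric.isBounded_closedBall (x := (0 : X)) (r := max Δ μ)).subset
    intro q hq
    rw [hSmem] at hq
    simp only [Metric.mem_closedBall, dist_zero_right, Prod.norm_def]
    exact max_le_max hq.2.1 hq.2.2.1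
  have hScomp : IsCompact S := Metric.isCompact_of_isClosed_isBounded hScl hSb
  set B : Set X := S ∩ {q | -(ε/2) ≤ Yt q.1 q.2} with hB
  have hBcomp : IsCompact B := hScomp.inter_right (isClosed_le continuous_const hYtcont)
  -- f ≤ 0 on S
  have hfS : ∀ q ∈ S, f q ≤ 0 := by
    intro q hq
    rw [hSmem] at hq
    refine h3 _ _ _ hq.2.1 hq.2.2.1 fun i hi => hq.2.2.2 i ?_
    have : i.val < l - 2 := hi
    omega
  -- f < 0 on B
  have hfB : ∀ q ∈ B, f q < 0 := by
    intro q hq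
    rcases hq with ⟨hqS, hqYt⟩
    rcases lt_or_eq_of_le (hfS q hqS) with h | h
    · exact h
    · exfalso
      rw [hSmem] at hqS
      have hle : Yt q.1 q.2 ≤ -ε := by
        refine h1 _ _ hqS.1 hqS.2.1 hqS.2.2.1 fun i hi => ?_
        by_cases hc : i.val + 2 < l
        · exact hqS.2.2.2 i hc
        · have : i = ⟨l - 2, by omega⟩ := by
            apply Fin.ext; simp; omega
          rw [this]; exact h
      have : -(ε/2) ≤ Yt q.1 q.2 := hqYt
      linarith
  rcases B.eq_empty_or_nonempty with hBe | hBne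
  · refine ⟨1, one_pos, fun z ψ h1' h2' h3' h4' => ?_⟩
    have hqS : (z, ψ) ∈ S := by rw [hSmem]; exact ⟨h1', h2', h3', h4'⟩
    have hqnB : (z, ψ) ∉ B := by rw [hBe]; exact Set.notMem_empty _
    have hYt : Yt z ψ < -(ε/2) := by
      by_contra hcon
      exact hqnB ⟨hqS, le_of_not_gt hcon⟩
    have hfz := hfS (z, ψ) hqS
    show 1 * f (z, ψ) + Yt z ψ ≤ -ε / 2
    linarith
  · obtain ⟨q0, hq0B, hq0max⟩ := hBcomp.exists_isMaxOn hBne hfcont.continuousOn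
    obtain ⟨q1, hq1B, hq1max⟩ := hBcomp.exists_isMaxOn hBne hYtcont.continuousOn
    obtain ⟨c, hc⟩ : ∃ c : ℝ, f q0 = -c := ⟨-f q0, by ring⟩
    have hcpos : 0 < c := by have := hfB q0 hq0B; linarith [hc]
    obtain ⟨M, hM⟩ : ∃ M : ℝ, Yt q1.1 q1.2 = M := ⟨_, rfl⟩
    have hMge : -(ε/2) ≤ M := hM ▸ hq1B.2
    obtain ⟨K, hK⟩ : ∃ K : ℝ, K = (M + ε/2)/c + 1 := ⟨_, rfl⟩
    have hKpos : 0 < K := by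
      rw [hK]
      have : 0 ≤ (M + ε/2)/c := div_nonneg (by linarith) hcpos.le
      linarith
    have hKc : K * c = (M + ε/2) + c := by
      rw [hK]; field_simp
    refine ⟨K, hKpos, fun z ψ h1' h2' h3' h4' => ?_⟩
    have hqS : (z, ψ) ∈ S := by rw [hSmem]; exact ⟨h1', h2', h3', h4'⟩
    show K * f (z, ψ) + Yt z ψ ≤ -ε / 2
    by_cases hqB : (z, ψ) ∈ B
    · have hfle : f (z, ψ) ≤ -c := by
        have := hq0max hqB; rw [hc] at this; exact this
      have hYtle : Yt z ψ ≤ M := by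
        have := hq1max hqB; rw [← hM]; exact this
      have hKf : K * f (z, ψ) ≤ K * (-c) :=
        mul_le_mul_of_nonneg_left hfle hKpos.le
      nlinarith [hKf, hKc, hYtle, hcpos]
    · have hYt : Yt z ψ < -(ε/2) := by
        by_contra hcon
        exact hqB ⟨hqS, le_of_not_gt hcon⟩
      have hfz : f (z, ψ) ≤ 0 := hfS (z, ψ) hqS
      have hKf : K * f (z, ψ) ≤ 0 := mul_nonpos_iff.mpr (Or.inl ⟨hKpos.le, hfz⟩)
      linarith
end
end

section
/- Negative-definite bound for the exponentially weighted excitation integral: Let Δ > 0, let θ : ℝ_{>0} → ℝ_{>0} be continuous, and let γ_Δ be a class-𝒦 function. Let ω : ℝ × ℝ → ℝ be measurable with t ↦ ω(t,x₂) locally integrable for each x₂, and suppose that for every x₂ with 0 < |x₂| ≤ Δ and every t ∈ ℝ, ∫_t^{t+θ(|x₂|)} |ω(τ,x₂)| dτ ≥ γ_Δ(|x₂|). Define V₄(t,x₂) := −∫_t^∞ e^{t−τ} |ω(τ,x₂) x₂|² dτ (assumed finite). Then: (a) for every T > 0, V₄(t,x₂) ≤ −e^{−T} ∫_t^{t+T}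 |ω(τ,x₂) x₂|² dτ; and (b) with γ(s) := min{ s, e^{−θ(s)} γ_Δ(s)² / θ(s) } for s > 0 and γ(0) := 0, one has V₄(t,x₂) ≤ −γ(|x₂|) |x₂|² for all t ∈ ℝ and all |x₂| ≤ Δ. -/
open MeasureTheory

noncomputable section

/-- **Negative-definite bound for the exponentially weighted excitation integral**
(the bound (17)–(18) on the auxiliary function `V₄`): (a) for every `T > 0`,
`V₄(t,x₂) ≤ -e^{-T}∫_t^{t+T}|ω(τ,x₂)x₂|²dτ`; (b) with
`γ(s) = min{s, e^{-θ(s)}γ_Δ(s)²/θ(s)}` for `s > 0` and `γ(0) = 0`, one has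
`V₄(t,x₂) ≤ -γ(|x₂|)x₂²` for all `t` and all `|x₂| ≤ Δ`. -/
theorem V4_negative_definite_bound (Δ : ℝ) (hΔ : 0 < Δ)
    (θ : ℝ → ℝ) (hθcont : ContinuousOn θ (Set.Ioi 0)) (hθpos : ∀ s : ℝ, 0 < s → 0 < θ s)
    (γΔ : ℝ → ℝ) (hγΔcont : ContinuousOn γΔ (Set.Ici 0))
    (hγΔmono : StrictMonoOn γΔ (Set.Ici 0)) (hγΔ0 : γΔ 0 = 0)
    (ω : ℝ → ℝ → ℝ)
    (hmeas : ∀ x₂ : ℝ, Measurable fun τ => ω τ x₂)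
    (hloc : ∀ (x₂ a b : ℝ), IntervalIntegrable (fun τ => |ω τ x₂|) volume a b)
    -- the excitation lower bound
    (hPE : ∀ x₂ : ℝ, 0 < |x₂| → |x₂| ≤ Δ → ∀ t : ℝ,
      γΔ |x₂| ≤ ∫ τ in t..(t + θ |x₂|), |ω τ x₂|)
    -- the exponentially weighted integral is finite
    (hint : ∀ (t x₂ : ℝ),
      IntegrableOn (fun τ => Real.exp (t - τ) * (ω τ x₂ * x₂) ^ 2) (Set.Ioi t))
    (V₄ : ℝ → ℝ → ℝ)
    (hV₄ : ∀ t x₂, V₄ t x₂ = -∫ τ in Set.Ioi t, Real.exp (t - τ) * (ω τ x₂ * x₂) ^ 2) :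
    -- (a)
    (∀ (t x₂ T : ℝ), 0 < T →
      V₄ t x₂ ≤ -Real.exp (-T) * ∫ τ in t..(t + T), (ω τ x₂ * x₂) ^ 2) ∧
    -- (b)
    (∀ t x₂ : ℝ, |x₂| ≤ Δ →
      V₄ t x₂ ≤
        -(if 0 < |x₂| then
            min |x₂| (Real.exp (-θ |x₂|) * (γΔ |x₂|) ^ 2 / θ |x₂|)
          else 0) * x₂ ^ 2) := by
  -- integrability of the square on bounded intervals to the right of `t`
  have hg_int : ∀ (t x₂ T : ℝ), 0 < T →
      IntegrableOn (fun τ => (ω τ x₂ * x₂) ^ 2) (Set.Ioc t (t + T)) := by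
    intro t x₂ T hT
    have h1 : IntegrableOn (fun τ => Real.exp (t - τ) * (ω τ x₂ * x₂) ^ 2)
        (Set.Ioc t (t + T)) := (hint t x₂).mono_set Set.Ioc_subset_Ioi_self
    refine Integrable.mono' (h1.const_mul (Real.exp T))
      (((hmeas x₂).mul_const x₂).pow_const 2).aestronglyMeasurable.restrict ?_
    refine (ae_restrict_iff' measurableSet_Ioc).2 (ae_of_all _ fun τ hτ => ?_)
    have h2 : (1 : ℝ) ≤ Real.exp T * Real.exp (t - τ) := by
      rw [← Real.exp_add]
      have : 0 ≤ T + (t - τ) := by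
        have := hτ.2; linarith
      calc (1:ℝ) = Real.exp 0 := (Real.exp_zero).symm
        _ ≤ _ := Real.exp_le_exp.2 this
    have h3 : 0 ≤ (ω τ x₂ * x₂) ^ 2 := sq_nonneg _
    rw [Real.norm_of_nonneg h3]
    have h4 := mul_le_mul_of_nonneg_right h2 h3
    rw [one_mul, mul_assoc] at h4
    exact h4
  -- part (a)
  have parta : ∀ (t x₂ T : ℝ), 0 < T →
      V₄ t x₂ ≤ -Real.exp (-T) * ∫ τ in t..(t + T), (ω τ x₂ * x₂) ^ 2 := by
    intro t x₂ T hT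
    rw [hV₄]
    have hle : t ≤ t + T := by linarith
    rw [intervalIntegral.integral_of_le hle]
    have step1 : ∫ τ in Set.Ioc t (t + T), Real.exp (t - τ) * (ω τ x₂ * x₂) ^ 2
        ≤ ∫ τ in Set.Ioi t, Real.exp (t - τ) * (ω τ x₂ * x₂) ^ 2 := by
      refine setIntegral_mono_set (hint t x₂) ?_
        (HasSubset.Subset.eventuallyLE Set.Ioc_subset_Ioi_self)
      exact ae_of_all _ fun τ => mul_nonneg (Real.exp_pos _).le (sq_nonneg _)
    have step2 : Real.exp (-T) * ∫ τ in Set.Ioc t (t + T), (ω τ x₂ * x₂) ^ 2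
        ≤ ∫ τ in Set.Ioc t (t + T), Real.exp (t - τ) * (ω τ x₂ * x₂) ^ 2 := by
      rw [← integral_const_mul]
      refine setIntegral_mono_on ((hg_int t x₂ T hT).const_mul _)
        ((hint t x₂).mono_set Set.Ioc_subset_Ioi_self) measurableSet_Ioc fun τ hτ => ?_
      have : Real.exp (-T) ≤ Real.exp (t - τ) := by
        apply Real.exp_le_exp.2; have := hτ.2; linarith
      nlinarith [sq_nonneg (ω τ x₂ * x₂)]
    linarith
  refine ⟨parta, ?_⟩
  intro t x₂ hx
  by_cases hx0 : 0 < |x₂|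
  · rw [if_pos hx0]
    set T := θ |x₂| with hTdef
    have hT : 0 < T := hθpos _ hx0
    have hle : t ≤ t + T := by linarith
    have key := parta t x₂ T hT
    -- Cauchy–Schwarz: (∫ |ω|)² ≤ T * ∫ ω²
    have hx2 : x₂ ≠ 0 := fun h => by simp [h] at hx0
    have hωsq : IntegrableOn (fun τ => |ω τ x₂| ^ 2) (Set.Ioc t (t + T)) := by
      have h0 := hg_int t x₂ T hT
      have heq : (fun τ => |ω τ x₂| ^ 2)
          = fun τ => (x₂ ^ 2)⁻¹ * (ω τ x₂ * x₂) ^ 2 := by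
        funext τ
        rw [sq_abs, mul_pow]
        field_simp
      rw [heq]
      exact h0.const_mul _
    set A : ℝ := ∫ τ in Set.Ioc t (t + T), |ω τ x₂| ^ 2 with hAdef
    have hA : 0 ≤ A :=
      setIntegral_nonneg measurableSet_Ioc fun τ _ => sq_nonneg _
    have hCS : (∫ τ in Set.Ioc t (t + T), |ω τ x₂|) ^ 2 ≤ T * A := by
      have hconj : Real.HolderConjugate 2 2 := ⟨by norm_num, by norm_num, by norm_num⟩
      have hmem : MemLp (fun τ => |ω τ x₂|) (ENNReal.ofReal 2)
          (volume.restrict (Set.Ioc t (t + T))) := by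
        rw [show ENNReal.ofReal 2 = 2 by norm_num]
        exact (memLp_two_iff_integrable_sq
          ((hmeas x₂).abs.aestronglyMeasurable.restrict)).2 hωsq
      have hone : MemLp (fun _ : ℝ => (1:ℝ)) (ENNReal.ofReal 2)
          (volume.restrict (Set.Ioc t (t + T))) :=
        memLp_const 1
      have hH := integral_mul_le_Lp_mul_Lq_of_nonneg hconj
        (ae_of_all _ fun τ => abs_nonneg (ω τ x₂)) (ae_of_all _ fun _ => zero_le_one)
        hmem hone
      simp only [mul_one, show ((2:ℝ)) = ((2:ℕ):ℝ) by norm_num,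
        Real.rpow_natCast, one_pow] at hH
      have hμ : ∫ _ in Set.Ioc t (t + T), (1:ℝ) = T := by
        simp [Real.volume_Ioc]
        linarith
      rw [hμ, ← hAdef] at hH
      have hInn : 0 ≤ ∫ τ in Set.Ioc t (t + T), |ω τ x₂| :=
        setIntegral_nonneg measurableSet_Ioc fun τ _ => abs_nonneg _
      have e1 : ((A : ℝ) ^ ((1:ℝ)/2)) ^ (2:ℕ) = A := by
        rw [← Real.rpow_natCast (A ^ ((1:ℝ)/2)) 2, ← Real.rpow_mul hA]
        norm_num
      have e2 : ((T : ℝ) ^ ((1:ℝ)/2)) ^ (2:ℕ) = T := by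
        rw [← Real.rpow_natCast (T ^ ((1:ℝ)/2)) 2, ← Real.rpow_mul hT.le]
        norm_num
      calc (∫ τ in Set.Ioc t (t + T), |ω τ x₂|) ^ 2
          ≤ ((A : ℝ) ^ ((1:ℝ)/2) * T ^ ((1:ℝ)/2)) ^ 2 := pow_le_pow_left₀ hInn hH 2
        _ = T * A := by rw [mul_pow, e1, e2, mul_comm]
    have hγnn : 0 ≤ γΔ |x₂| := by
      rcases eq_or_lt_of_le (abs_nonneg x₂) with h | h
      · rw [← h, hγΔ0]
      · rw [← hγΔ0]
        exact (hγΔmono Set.self_mem_Ici (le_of_lt h) h).le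
    have hPE' : γΔ |x₂| ≤ ∫ τ in Set.Ioc t (t + T), |ω τ x₂| := by
      have := hPE x₂ hx0 hx t
      rwa [intervalIntegral.integral_of_le hle] at this
    have hγsq : (γΔ |x₂|) ^ 2 ≤ T * A :=
      le_trans (pow_le_pow_left₀ hγnn hPE' 2) hCS
    have h5 : Real.exp (-T) * (γΔ |x₂|) ^ 2 / T ≤ Real.exp (-T) * A := by
      rw [div_le_iff₀ hT]
      nlinarith [Real.exp_pos (-T)]
    have hmin : min |x₂| (Real.exp (-T) * (γΔ |x₂|) ^ 2 / T) ≤ Real.exp (-T) * A :=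
      (min_le_right _ _).trans h5
    have hB : ∫ τ in t..(t + T), (ω τ x₂ * x₂) ^ 2 = A * x₂ ^ 2 := by
      rw [intervalIntegral.integral_of_le hle, hAdef, ← integral_mul_const]
      congr 1
      funext τ
      rw [mul_pow, sq_abs]
    rw [hB] at key
    have hmul := mul_le_mul_of_nonneg_right hmin (sq_nonneg x₂)
    nlinarith [key, hmul]
  · rw [if_neg hx0]
    rw [hV₄]
    simp only [neg_zero, zero_mul]
    rw [neg_nonpos]
    exact setIntegral_nonneg measurableSet_Ioi fun τ _ =>
      mul_nonneg (Real.exp_pos _).le (sq_nonneg _)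
end
end
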